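/- arXiv:1504.03526 — 2 statements merged into one kernel-verified Lean document; each statement's English description precedes it below -/
import Mathlib

section
/- For every real L > 0 and all real numbers z, ζ with |z| < 1/(2L), |ζ| < 1/(2L) and z ≠ ζ, the double series ∑_{κ≥1} ∑_{ℓ≥1} (L/2)^{κ+ℓ} · (4κℓ/(κ+ℓ)) · binom(2κ−1, κ) · binom(2ℓ−1, ℓ) · z^κ ζ^ℓ converges and its sum equals (zζ/(z−ζ)²) · [ (1 − L(z+ζ)) / √((1 − 2Lz)(1 − 2Lζ)) − 1 ]. -/
/-!
Put `x = 2Lz` and `y = 2Lζ`. The binomial series gives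
`(1 - x)^(-3/2) = ∑ₙ multichoose(3/2, n) xⁿ` with `multichoose(3/2, n) = (n+1) C(2n+1, n+1) / 4ⁿ`,
and in these terms the `(κ, ℓ)` coefficient of the double series is
`(x/2) multichoose(3/2, κ-1) x^(κ-1) · (y/2) multichoose(3/2, ℓ-1) y^(ℓ-1) / (κ + ℓ)`.
Writing `1/(κ + ℓ) = ∫₀¹ t^(κ+ℓ-1) dt` and summing under the integral turns the double series into
`∫₀¹ t xy / (4 ((1 - tx)(1 - ty))^(3/2)) dt`, and
`(xy/(x - y)²) (1 - t(x + y)/2) / √((1 - tx)(1 - ty))` is an antiderivative of the integrand.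
-/

open Real

theorem Nat.add_two_mul_choose_two_mul_add_three (n : ℕ) :
    (n + 2) * (2 * n + 3).choose (n + 2) = 2 * (2 * n + 3) * (2 * n + 1).choose (n + 1) := by
  have h := Nat.add_one_mul_choose_eq (2 * n + 2) (n + 1)
  have hc : (2 * n + 2).choose (n + 1) = 2 * (2 * n + 1).choose (n + 1) := by
    rw [Nat.choose_succ_succ, Nat.choose_symm_half]; ring
  rw [hc] at h
  linarith

theorem Ring.add_one_mul_multichoose_succ {K : Type*} [Field K] [CharZero K] (r : K) (n : ℕ) :
    (n + 1) * Ring.multichoose r (n + 1) = Ring.multichoose r n * (r + n) := by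
  have h := Ring.factorial_nsmul_multichoose_eq_ascPochhammer r (n + 1)
  rw [Polynomial.ascPochhammer_smeval_eq_eval, ascPochhammer_succ_eval,
    ← Polynomial.ascPochhammer_smeval_eq_eval, ← Ring.factorial_nsmul_multichoose_eq_ascPochhammer,
    Nat.factorial_succ, mul_nsmul', nsmul_eq_mul, nsmul_eq_mul, nsmul_eq_mul] at h
  push_cast at h
  apply mul_left_cancel₀ (Nat.cast_ne_zero.mpr n.factorial_ne_zero : (n.factorial : K) ≠ 0)
  linear_combination h

theorem Ring.multichoose_three_halves (n : ℕ) :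
    Ring.multichoose (3 / 2 : ℝ) n = (n + 1) * (2 * n + 1).choose (n + 1) / 4 ^ n := by
  induction n with
  | zero => simp
  | succ n ih =>
    have hrec := Ring.add_one_mul_multichoose_succ (3 / 2 : ℝ) n
    have hchoose : ((n : ℝ) + 2) * ((2 * n + 3).choose (n + 2) : ℕ)
        = 2 * (2 * n + 3) * ((2 * n + 1).choose (n + 1) : ℕ) := by
      exact_mod_cast Nat.add_two_mul_choose_two_mul_add_three n
    rw [ih] at hrec
    rw [show 2 * (n + 1) + 1 = 2 * n + 3 by ring, eq_div_iff (by positivity)]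
    push_cast
    field_simp at hrec
    linear_combination 2 * hrec - hchoose

theorem hasSum_multichoose_three_halves_mul_pow {x : ℝ} (hx : |x| < 1) :
    HasSum (fun n => Ring.multichoose (3 / 2 : ℝ) n * x ^ n) ((1 - x) * √(1 - x))⁻¹ := by
  have h := (one_div_one_sub_rpow_hasFPowerSeriesOnBall_zero (3 / 2)).hasSum (y := x)
    (by simpa [enorm_eq_nnnorm, ← NNReal.coe_lt_coe] using hx)
  have hpow : (1 - x) ^ (3 / 2 : ℝ) = (1 - x) * √(1 - x) := by
    rw [show (3 / 2 : ℝ) = 1 + 1 / 2 by norm_num, rpow_add (by linarith [(abs_lt.mp hx).2]),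
      rpow_one, sqrt_eq_rpow]
  simpa [FormalMultilinearSeries.ofScalars_apply_eq, Ring.multichoose_eq, mul_comm, hpow] using h

theorem summable_abs_multichoose_three_halves_mul_pow {x : ℝ} (hx : |x| < 1) :
    Summable fun n => |Ring.multichoose (3 / 2 : ℝ) n * x ^ n| := by
  refine (hasSum_multichoose_three_halves_mul_pow (x := |x|) (by rwa [abs_abs])).summable.congr
    fun n => ?_
  have hμ : 0 ≤ Ring.multichoose (3 / 2 : ℝ) n := by
    rw [Ring.multichoose_three_halves]; positivity
  rw [abs_mul, abs_pow, abs_of_nonneg hμ]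

theorem integral_mul_mul_pow_mul_mul_pow (a b : ℝ) (m n : ℕ) :
    ∫ t in (0 : ℝ)..1, t * (a * t ^ m * (b * t ^ n)) = a * b / ((m : ℝ) + 1 + (n + 1)) := by
  have h : ∀ t : ℝ, t * (a * t ^ m * (b * t ^ n)) = a * b * t ^ (m + n + 1) := fun t => by ring
  simp_rw [h, intervalIntegral.integral_const_mul, integral_pow]
  push_cast
  ring

theorem hasSum_mul_div_add_add_two {α β : ℕ → ℝ} {A B : ℝ → ℝ}
    (hα : Summable fun m => |α m|) (hβ : Summable fun n => |β n|)
    (hA : ∀ t ∈ Set.Ioc (0 : ℝ) 1, HasSum (fun m => α m * t ^ m) (A t))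
    (hB : ∀ t ∈ Set.Ioc (0 : ℝ) 1, HasSum (fun n => β n * t ^ n) (B t)) :
    HasSum (fun p : ℕ × ℕ => α p.1 * β p.2 / ((p.1 : ℝ) + 1 + (p.2 + 1)))
      (∫ t in (0 : ℝ)..1, t * (A t * B t)) := by
  have hbound {γ : ℕ → ℝ} {t : ℝ} (ht : t ∈ Set.Ioc 0 1) (m : ℕ) : ‖γ m * t ^ m‖ ≤ |γ m| := by
    rw [norm_eq_abs, abs_mul, abs_pow, abs_of_pos ht.1]
    exact mul_le_of_le_one_right (abs_nonneg _) (pow_le_one₀ ht.1.le ht.2)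
  simp_rw [← integral_mul_mul_pow_mul_mul_pow]
  refine intervalIntegral.hasSum_integral_of_dominated_convergence
    (fun p _ => |α p.1| * |β p.2|) (fun p => by fun_prop) ?_ ?_ intervalIntegrable_const ?_
  · refine fun p => Filter.Eventually.of_forall fun t ht => ?_
    rw [Set.uIoc_of_le zero_le_one] at ht
    rw [norm_mul, norm_mul, norm_eq_abs t, abs_of_pos ht.1]
    exact (mul_le_of_le_one_left (by positivity) ht.2).trans
      (mul_le_mul (hbound ht p.1) (hbound ht p.2) (norm_nonneg _) (abs_nonneg _))
  · exact Filter.Eventually.of_forall fun _ _ =>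
      hα.mul_of_nonneg hβ (fun _ => abs_nonneg _) (fun _ => abs_nonneg _)
  · refine Filter.Eventually.of_forall fun t ht => ?_
    rw [Set.uIoc_of_le zero_le_one] at ht
    have hα' : Summable fun m => ‖α m * t ^ m‖ :=
      hα.of_nonneg_of_le (fun _ => norm_nonneg _) (hbound ht)
    have hβ' : Summable fun n => ‖β n * t ^ n‖ :=
      hβ.of_nonneg_of_le (fun _ => norm_nonneg _) (hbound ht)
    have hαβ := summable_mul_of_summable_norm hα' hβ'
    exact ((hA t ht).mul (hB t ht) hαβ).mul_left t

theorem mul_lt_one_of_mem_Icc {t x : ℝ} (ht : t ∈ Set.Icc (0 : ℝ) 1) (hx : x < 1) : t * x < 1 := by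
  rcases le_or_gt x 0 with h | h <;> nlinarith [ht.1, ht.2]

theorem hasDerivAt_one_sub_mul_div_sqrt_mul_sqrt {x y u : ℝ} (hx : u * x < 1) (hy : u * y < 1) :
    HasDerivAt (fun v => (1 - v * ((x + y) / 2)) / (√(1 - v * x) * √(1 - v * y)))
      (u * (x - y) ^ 2 / 4 *
        (((1 - u * x) * √(1 - u * x))⁻¹ * ((1 - u * y) * √(1 - u * y))⁻¹)) u := by
  have hsqrt {c : ℝ} (hc : u * c < 1) :
      HasDerivAt (fun v => √(1 - v * c)) (-c / (2 * √(1 - u * c))) u :=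
    ((hasDerivAt_mul_const c).const_sub 1).sqrt (sub_pos.mpr hc).ne'
  have hpx : 0 < 1 - u * x := sub_pos.mpr hx
  have hpy : 0 < 1 - u * y := sub_pos.mpr hy
  have hsx : 0 < √(1 - u * x) := sqrt_pos.mpr hpx
  have hsy : 0 < √(1 - u * y) := sqrt_pos.mpr hpy
  refine (((hasDerivAt_mul_const ((x + y) / 2)).const_sub 1).div
    ((hsqrt hx).mul (hsqrt hy)) (mul_pos hsx hsy).ne').congr_deriv ?_
  simp only [Pi.mul_apply]
  have hx2 := sq_sqrt hpx.le
  have hy2 := sq_sqrt hpy.le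
  set a := √(1 - u * x)
  set b := √(1 - u * y)
  have hnum : -((x + y) / 2) * (a ^ 2 * b ^ 2) + (1 - u * ((x + y) / 2)) * (x * b ^ 2 + y * a ^ 2) / 2
      = u * (x - y) ^ 2 / 4 := by
    rw [hx2, hy2]; ring
  rw [← hx2, ← hy2]
  field_simp
  linear_combination 16 * hnum

theorem integral_mul_inv_mul_sqrt_one_sub_mul {x y : ℝ} (hx : x < 1) (hy : y < 1)
    (hxy : x ≠ y) :
    ∫ t in (0 : ℝ)..1, t * (x / 2 * ((1 - t * x) * √(1 - t * x))⁻¹ *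
        (y / 2 * ((1 - t * y) * √(1 - t * y))⁻¹))
      = x * y / (x - y) ^ 2 * ((1 - (x + y) / 2) / √((1 - x) * (1 - y)) - 1) := by
  have hpos {c : ℝ} (hc : c < 1) {t : ℝ} (ht : t ∈ Set.uIcc (0 : ℝ) 1) : 0 < 1 - t * c := by
    rw [Set.uIcc_of_le zero_le_one] at ht
    exact sub_pos.mpr (mul_lt_one_of_mem_Icc ht hc)
  have hne {c : ℝ} (hc : c < 1) : ∀ t ∈ Set.uIcc (0 : ℝ) 1, (1 - t * c) * √(1 - t * c) ≠ 0 :=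
    fun t ht => by have := hpos hc ht; positivity
  have hderiv : ∀ t ∈ Set.uIcc (0 : ℝ) 1,
      HasDerivAt (fun v => x * y / (x - y) ^ 2 *
          ((1 - v * ((x + y) / 2)) / (√(1 - v * x) * √(1 - v * y))))
        (t * (x / 2 * ((1 - t * x) * √(1 - t * x))⁻¹ *
          (y / 2 * ((1 - t * y) * √(1 - t * y))⁻¹))) t := by
    intro t ht
    refine ((hasDerivAt_one_sub_mul_div_sqrt_mul_sqrt (sub_pos.mp (hpos hx ht))
      (sub_pos.mp (hpos hy ht))).const_mul _).congr_deriv ?_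
    field_simp [sub_ne_zero.mpr hxy]
    ring
  have hcont : ContinuousOn (fun t => t * (x / 2 * ((1 - t * x) * √(1 - t * x))⁻¹ *
      (y / 2 * ((1 - t * y) * √(1 - t * y))⁻¹))) (Set.uIcc 0 1) := by
    have := hne hx
    have := hne hy
    fun_prop (disch := assumption)
  rw [intervalIntegral.integral_eq_sub_of_hasDerivAt hderiv hcont.intervalIntegrable,
    sqrt_mul (by linarith)]
  simp only [one_mul, zero_mul, sub_zero, sqrt_one, mul_one, div_one]
  ring

theorem hasSum_multichoose_three_halves_mul_div_add_add_two {x y : ℝ} (hx : |x| < 1)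
    (hy : |y| < 1) (hxy : x ≠ y) :
    HasSum (fun p : ℕ × ℕ => x / 2 * (Ring.multichoose (3 / 2 : ℝ) p.1 * x ^ p.1) *
        (y / 2 * (Ring.multichoose (3 / 2 : ℝ) p.2 * y ^ p.2)) / ((p.1 : ℝ) + 1 + (p.2 + 1)))
      (x * y / (x - y) ^ 2 * ((1 - (x + y) / 2) / √((1 - x) * (1 - y)) - 1)) := by
  have hsummable {c : ℝ} (hc : |c| < 1) :
      Summable fun n => |c / 2 * (Ring.multichoose (3 / 2 : ℝ) n * c ^ n)| := by
    simpa only [abs_mul] using (summable_abs_multichoose_three_halves_mul_pow hc).mul_left |c / 2|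
  have hseries {c : ℝ} (hc : |c| < 1) (t : ℝ) (ht : t ∈ Set.Ioc (0 : ℝ) 1) :
      HasSum (fun n => c / 2 * (Ring.multichoose (3 / 2 : ℝ) n * c ^ n) * t ^ n)
        (c / 2 * ((1 - t * c) * √(1 - t * c))⁻¹) := by
    have htc : |t * c| < 1 := by
      rw [abs_mul, abs_of_pos ht.1]
      exact mul_lt_one_of_nonneg_of_lt_one_right ht.2 (abs_nonneg c) hc
    refine ((hasSum_multichoose_three_halves_mul_pow htc).mul_left (c / 2)).congr_fun fun n => ?_
    ring
  have h := hasSum_mul_div_add_add_two (hsummable hx) (hsummable hy) (hseries hx) (hseries hy)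
  rwa [integral_mul_inv_mul_sqrt_one_sub_mul (abs_lt.mp hx).2 (abs_lt.mp hy).2 hxy] at h

/-- For a one-cut β-ensemble supported on `[0, 2L]`, the generating function of the
limiting covariances `(L/2)^{κ+ℓ}(4κℓ/(κ+ℓ))C(2κ−1,κ)C(2ℓ−1,ℓ)` equals
`(zζ/(z−ζ)²)·[(1 − L(z+ζ))/√((1−2Lz)(1−2Lζ)) − 1]`. -/
theorem zero_twoL_generating_function (L : ℝ) (hL : 0 < L) (z ζ : ℝ)
    (hz : |z| < 1 / (2 * L)) (hζ : |ζ| < 1 / (2 * L)) (hzζ : z ≠ ζ) :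
    HasSum (fun kl : ℕ × ℕ =>
      (L / 2) ^ ((kl.1 + 1) + (kl.2 + 1)) *
        (4 * (kl.1 + 1 : ℝ) * (kl.2 + 1 : ℝ) / ((kl.1 + 1 : ℝ) + (kl.2 + 1 : ℝ))) *
        (Nat.choose (2 * (kl.1 + 1) - 1) (kl.1 + 1) : ℝ) *
        (Nat.choose (2 * (kl.2 + 1) - 1) (kl.2 + 1) : ℝ) *
        z ^ (kl.1 + 1) * ζ ^ (kl.2 + 1))
      (z * ζ / (z - ζ) ^ 2 *
        ((1 - L * (z + ζ)) / Real.sqrt ((1 - 2 * L * z) * (1 - 2 * L * ζ)) - 1)) := by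
  have h2L : 0 < 2 * L := by positivity
  have hscaled {c : ℝ} (hc : |c| < 1 / (2 * L)) : |2 * L * c| < 1 := by
    rw [abs_mul, abs_of_pos h2L]
    rwa [lt_div_iff₀' h2L] at hc
  have hxy : 2 * L * z ≠ 2 * L * ζ := fun h => hzζ (mul_left_cancel₀ h2L.ne' h)
  convert hasSum_multichoose_three_halves_mul_div_add_add_two (hscaled hz) (hscaled hζ) hxy
    using 1
  · funext kl
    have hfour (n : ℕ) : (4 : ℝ) ^ n = 2 ^ n * 2 ^ n := by rw [← mul_pow]; norm_num
    rw [Ring.multichoose_three_halves, Ring.multichoose_three_halves,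
      show 2 * (kl.1 + 1) - 1 = 2 * kl.1 + 1 by omega,
      show 2 * (kl.2 + 1) - 1 = 2 * kl.2 + 1 by omega, div_pow, hfour, hfour]
    field_simp
    ring
  · field_simp [sub_ne_zero.mpr hzζ]
end

section
/- For all integers κ ≥ 1 and ℓ ≥ 1, the following identity of rational numbers holds: ∑_{p=1}^{κ} ∑_{q=1}^{ℓ, with p ≡ q (mod 2)} 2^{κ+ℓ−p−q} · binom(κ,p) · binom(ℓ,q) · (4pq/(p+q)) · binom(p−1, ⌊p/2⌋) · binom(q−1, ⌊q/2⌋) = (4κℓ/(κ+ℓ)) · binom(2κ−1, κ) · binom(2ℓ−1, ℓ). -/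
/-!
Let `w(n, j) = walkCount n j` count the `±1` walks of length `n` from `0` to `j`, i.e. the
coefficient of `x ^ j` in `(x + x⁻¹) ^ n`. Differentiating `(x + x⁻¹) ^ (n + 1)` gives the
ballot identity `j w(n+1, j) = (n+1) (w(n, j-1) - w(n, j+1))`, which makes
`(p + q) 2j w(p, j) w(q, j)` telescope in `j` to `4pq (G(j-1) - G(j+1))` with
`G(i) = w(p-1, i) w(q-1, i)`. Hence `∑_{j ≥ 1} 2j w(p, j) w(q, j)` is exactly the factor
`4pq/(p+q) C(p-1, ⌊p/2⌋) C(q-1, ⌊q/2⌋)` of the left-hand side (or `0` when `p ≢ q mod 2`).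

Next, `(x + 2 + x⁻¹) ^ κ = (x^½ + x^-½) ^ (2κ)` gives
`∑_p 2^(κ-p) C(κ, p) w(p, j) = w(2κ, 2j)`, so the left-hand side collapses to
`∑_{j ≥ 1} 2j w(2κ, 2j) w(2ℓ, 2j)`. This is the first identity again at `(2κ, 2ℓ)`, odd `j`
contributing nothing, and it evaluates to the right-hand side.
-/

open Finset

def walkCount : ℕ → ℤ → ℚ
  | 0, j => if j = 0 then 1 else 0
  | n + 1, j => walkCount n (j - 1) + walkCount n (j + 1)

@[simp] lemma walkCount_zero (j : ℤ) : walkCount 0 j = if j = 0 then 1 else 0 := rfl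

lemma walkCount_succ (n : ℕ) (j : ℤ) :
    walkCount (n + 1) j = walkCount n (j - 1) + walkCount n (j + 1) := rfl

lemma walkCount_neg (n : ℕ) (j : ℤ) : walkCount n (-j) = walkCount n j := by
  induction n generalizing j with
  | zero => simp
  | succ n ih => rw [walkCount_succ, walkCount_succ, ← ih (j + 1), ← ih (j - 1)]; ring_nf

lemma walkCount_eq_zero_of_lt {n : ℕ} {j : ℤ} (h : n < j) : walkCount n j = 0 := by
  induction n generalizing j with
  | zero => simp; omega
  | succ n ih => rw [walkCount_succ, ih (by omega), ih (by omega), add_zero]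

lemma walkCount_eq_zero_of_odd {n : ℕ} {j : ℤ} (h : Odd (n + j)) : walkCount n j = 0 := by
  rw [Int.odd_iff] at h
  induction n generalizing j with
  | zero => simp; omega
  | succ n ih => rw [walkCount_succ, ih (by omega), ih (by omega), add_zero]

lemma walkCount_sub_two_mul (n k : ℕ) : walkCount n (n - 2 * k) = n.choose k := by
  induction n generalizing k with
  | zero => cases k <;> simp; omega
  | succ n ih =>
    rw [Nat.cast_succ, walkCount_succ]
    cases k with
    | zero =>
      rw [walkCount_eq_zero_of_lt (j := _ + 1) (by omega), add_zero]
      simpa using ih 0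
    | succ k =>
      rw [Nat.choose_succ_succ', Nat.cast_add (n.choose k), ← ih k, ← ih (k + 1), add_comm]
      congr 2 <;> push_cast <;> ring

lemma walkCount_natCast_of_lt_two (n : ℕ) {j : ℕ} (hj : j < 2) :
    walkCount n j = if n % 2 = j then (n.choose ((n + 1) / 2) : ℚ) else 0 := by
  split_ifs with h
  · rw [← walkCount_neg, ← walkCount_sub_two_mul]
    congr 1
    omega
  · exact walkCount_eq_zero_of_odd (by rw [Int.odd_iff]; omega)

lemma mul_walkCount_succ (n : ℕ) (j : ℤ) :
    j * walkCount (n + 1) j = (n + 1) * (walkCount n (j - 1) - walkCount n (j + 1)) := by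
  induction n generalizing j with
  | zero =>
    simp only [walkCount_succ, walkCount_zero]
    rcases eq_or_ne j 1 with rfl | h₁
    · norm_num
    rcases eq_or_ne j (-1) with rfl | h₂
    · norm_num
    rw [if_neg (by omega), if_neg (by omega)]
    ring
  | succ n ih =>
    have h₁ := ih (j - 1)
    have h₂ := ih (j + 1)
    have hA := walkCount_succ n (j - 1)
    have hB := walkCount_succ n (j + 1)
    simp only [sub_add_cancel, add_sub_cancel_right] at h₁ h₂ hA hB
    rw [walkCount_succ (n + 1)]
    push_cast at *
    linear_combination h₁ + h₂ - (n + 1) * (hA - hB)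

lemma add_mul_walkCount_mul_walkCount (a b : ℕ) (j : ℤ) :
    ((a + 1 : ℚ) + (b + 1)) * (2 * j * walkCount (a + 1) j * walkCount (b + 1) j) =
      4 * (a + 1) * (b + 1) *
        (walkCount a (j - 1) * walkCount b (j - 1) -
          walkCount a (j + 1) * walkCount b (j + 1)) := by
  linear_combination (2 * (a + 1) * walkCount (a + 1) j) * mul_walkCount_succ b j
    + (2 * (b + 1) * walkCount (b + 1) j) * mul_walkCount_succ a j
    + (2 * (a + 1) * (b + 1) * (walkCount b (j - 1) - walkCount b (j + 1))) * walkCount_succ a j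
    + (2 * (a + 1) * (b + 1) * (walkCount a (j - 1) - walkCount a (j + 1))) * walkCount_succ b j

lemma walkCount_mul_walkCount_zero_add_one (a b : ℕ) :
    walkCount a 0 * walkCount b 0 + walkCount a 1 * walkCount b 1 =
      if a % 2 = b % 2 then (a.choose ((a + 1) / 2) * b.choose ((b + 1) / 2) : ℚ) else 0 := by
  rw [← Nat.cast_zero, ← Nat.cast_one, walkCount_natCast_of_lt_two a two_pos,
    walkCount_natCast_of_lt_two b two_pos, walkCount_natCast_of_lt_two a one_lt_two,
    walkCount_natCast_of_lt_two b one_lt_two]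
  split_ifs <;> first | omega | simp

lemma add_mul_sum_range_walkCount_mul_walkCount (a b N : ℕ) (hN : a < N) :
    ((a + 1 : ℚ) + (b + 1)) *
      ∑ i ∈ range N, 2 * ((i : ℚ) + 1) * walkCount (a + 1) (i + 1) * walkCount (b + 1) (i + 1) =
      4 * (a + 1) * (b + 1) * (walkCount a 0 * walkCount b 0 + walkCount a 1 * walkCount b 1) := by
  let G : ℕ → ℚ := fun i => walkCount a i * walkCount b i
  have hterm : ∀ i ∈ range N,
      ((a + 1 : ℚ) + (b + 1)) *
          (2 * ((i : ℚ) + 1) * walkCount (a + 1) (i + 1) * walkCount (b + 1) (i + 1)) =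
        4 * (a + 1) * (b + 1) * ((G i + G (i + 1)) - (G (i + 1) + G (i + 1 + 1))) := by
    intro i _
    have := add_mul_walkCount_mul_walkCount a b (i + 1)
    simp only [G, Nat.cast_add, Nat.cast_one, add_sub_cancel_right, Int.cast_add,
      Int.cast_natCast, Int.cast_one] at this ⊢
    linear_combination this
  have htail : G N + G (N + 1) = 0 := by
    simp only [G, walkCount_eq_zero_of_lt (n := a) (j := N) (by omega),
      walkCount_eq_zero_of_lt (n := a) (j := (N + 1 : ℕ)) (by omega), zero_mul, add_zero]
  rw [mul_sum, sum_congr rfl hterm, ← mul_sum, sum_range_sub' (fun i => G i + G (i + 1)), htail,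
    sub_zero]
  simp [G]

lemma sum_range_walkCount_mul_walkCount (p q N : ℕ) (hp : 1 ≤ p) (hq : 1 ≤ q) (hN : p ≤ N) :
    ∑ i ∈ range N, 2 * ((i : ℚ) + 1) * walkCount p (i + 1) * walkCount q (i + 1) =
      if p % 2 = q % 2 then
        4 * (p : ℚ) * q / (p + q) * (p - 1).choose (p / 2) * (q - 1).choose (q / 2)
      else 0 := by
  obtain ⟨a, rfl⟩ := Nat.exists_eq_add_of_le' hp
  obtain ⟨b, rfl⟩ := Nat.exists_eq_add_of_le' hq
  rw [← mul_right_inj' (show ((a + 1 : ℕ) : ℚ) + (b + 1 : ℕ) ≠ 0 by positivity)]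
  push_cast
  rw [add_mul_sum_range_walkCount_mul_walkCount a b N (by omega),
    walkCount_mul_walkCount_zero_add_one]
  split_ifs
  · field_simp
  · omega
  · omega
  · simp

lemma sum_choose_mul_pow_mul_walkCount (κ : ℕ) (j : ℤ) :
    ∑ p ∈ range (κ + 1), (κ.choose p : ℚ) * 2 ^ (κ - p) * walkCount p j =
      walkCount (2 * κ) (2 * j) := by
  induction κ generalizing j with
  | zero => simp
  | succ κ ih =>
    have hsplit := sum_choose_succ_mul (fun p k => (2 : ℚ) ^ k * walkCount p j) κ
    have hstay : ∑ p ∈ range (κ + 1), (κ.choose p : ℚ) * (2 ^ (κ + 1 - p) * walkCount p j) =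
        2 * walkCount (2 * κ) (2 * j) := by
      rw [← ih, mul_sum]
      refine sum_congr rfl fun p hp => ?_
      rw [Nat.sub_add_comm (mem_range_succ_iff.mp hp), pow_succ]
      ring
    have hmove : ∑ p ∈ range (κ + 1), (κ.choose p : ℚ) * (2 ^ (κ - p) * walkCount (p + 1) j) =
        walkCount (2 * κ) (2 * (j - 1)) + walkCount (2 * κ) (2 * (j + 1)) := by
      simp only [walkCount_succ _ j, ← ih, ← sum_add_distrib]
      exact sum_congr rfl fun p _ => by ring
    simp only [mul_assoc] at hsplit ⊢
    rw [hsplit, hstay, hmove, show 2 * (κ + 1) = 2 * κ + 1 + 1 by ring, walkCount_succ,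
      walkCount_succ, walkCount_succ]
    ring_nf

lemma sum_Icc_choose_mul_pow_mul_walkCount (κ : ℕ) {j : ℤ} (hj : j ≠ 0) :
    ∑ p ∈ Icc 1 κ, (κ.choose p : ℚ) * 2 ^ (κ - p) * walkCount p j =
      walkCount (2 * κ) (2 * j) := by
  rw [← sum_choose_mul_pow_mul_walkCount, range_eq_Ico,
    sum_eq_sum_Ico_succ_bot (by omega : 0 < κ + 1), Ico_add_one_right_eq_Icc]
  simp [hj]

lemma Finset.sum_range_two_mul {M : Type*} [AddCommMonoid M] (f : ℕ → M) (n : ℕ) :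
    ∑ i ∈ range (2 * n), f i = ∑ i ∈ range n, (f (2 * i) + f (2 * i + 1)) := by
  induction n with
  | zero => simp
  | succ n ih =>
    rw [mul_add, mul_one, sum_range_succ, sum_range_succ, sum_range_succ, ih, add_assoc]

lemma sum_range_walkCount_two_mul (κ ℓ : ℕ) (hκ : 1 ≤ κ) (hℓ : 1 ≤ ℓ) :
    ∑ i ∈ range κ, 2 * ((i : ℚ) + 1) * walkCount (2 * κ) (2 * (i + 1)) *
        walkCount (2 * ℓ) (2 * (i + 1)) =
      4 * κ * ℓ / (κ + ℓ) * (2 * κ - 1).choose κ * (2 * ℓ - 1).choose ℓ := by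
  have h := sum_range_walkCount_mul_walkCount (2 * κ) (2 * ℓ) (2 * κ) (by omega) (by omega) le_rfl
  have hodd : ∀ i : ℕ, walkCount (2 * κ) (2 * i + 1) = 0 := fun i =>
    walkCount_eq_zero_of_odd (by push_cast; exact ⟨κ + i, by ring⟩)
  rw [if_pos (by omega), sum_range_two_mul] at h
  push_cast at h
  simp only [hodd, mul_zero, zero_mul, zero_add, Nat.mul_div_cancel_left _ two_pos] at h
  simp only [show ∀ x : ℤ, 2 * x + 1 + 1 = 2 * (x + 1) from fun x => by ring] at h
  have hκℓ : (κ : ℚ) + ℓ ≠ 0 := by positivity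
  rw [show 4 * (κ : ℚ) * ℓ / (κ + ℓ) = 4 * (2 * κ) * (2 * ℓ) / (2 * κ + 2 * ℓ) / 2 by
    field_simp, div_mul_eq_mul_div, div_mul_eq_mul_div, ← h, sum_div]
  exact sum_congr rfl fun i _ => by ring

lemma parity_summand_eq_sum_range_walkCount {κ ℓ p q : ℕ} (hp : p ∈ Icc 1 κ) (hq : q ∈ Icc 1 ℓ) :
    (if p % 2 = q % 2 then
        (2 : ℚ) ^ (κ + ℓ - p - q) * κ.choose p * ℓ.choose q * (4 * p * q / (p + q)) *
          (p - 1).choose (p / 2) * (q - 1).choose (q / 2)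
      else 0) =
      ∑ i ∈ range κ, 2 * ((i : ℚ) + 1) * (κ.choose p * 2 ^ (κ - p) * walkCount p (i + 1)) *
        (ℓ.choose q * 2 ^ (ℓ - q) * walkCount q (i + 1)) := by
  rw [mem_Icc] at hp hq
  have hpow : (2 : ℚ) ^ (κ + ℓ - p - q) = 2 ^ (κ - p) * 2 ^ (ℓ - q) := by
    rw [← pow_add]; congr 1; omega
  calc _ = κ.choose p * 2 ^ (κ - p) * (ℓ.choose q * 2 ^ (ℓ - q)) *
        ∑ i ∈ range κ, 2 * ((i : ℚ) + 1) * walkCount p (i + 1) * walkCount q (i + 1) := by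
        rw [sum_range_walkCount_mul_walkCount p q κ hp.1 hq.1 hp.2]
        split_ifs
        · rw [hpow]; ring
        · rw [mul_zero]
    _ = _ := by rw [mul_sum]; exact sum_congr rfl fun i _ => by ring

/-- At `c = 1`, the double-sum formula for the limiting covariances of power traces of the
β-Wishart ensemble equals the closed-form covariances of an ensemble supported on `[0, 4]`:
`∑_{p=1}^{κ} ∑_{q=1,p≡q(2)}^{ℓ} 2^{κ+ℓ−p−q} C(κ,p) C(ℓ,q) (4pq/(p+q)) C(p−1,⌊p/2⌋) C(q−1,⌊q/2⌋)
= (4κℓ/(κ+ℓ)) C(2κ−1,κ) C(2ℓ−1,ℓ)`. -/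
theorem wishart_c_one_identity (κ ℓ : ℕ) (hκ : 1 ≤ κ) (hℓ : 1 ≤ ℓ) :
    (∑ p ∈ Finset.Icc 1 κ, ∑ q ∈ Finset.Icc 1 ℓ,
      if p % 2 = q % 2 then
        (2 : ℚ) ^ (κ + ℓ - p - q) * (Nat.choose κ p : ℚ) * (Nat.choose ℓ q : ℚ) *
          (4 * (p : ℚ) * (q : ℚ) / ((p : ℚ) + (q : ℚ))) *
          (Nat.choose (p - 1) (p / 2) : ℚ) * (Nat.choose (q - 1) (q / 2) : ℚ)
      else 0) =
    (4 * (κ : ℚ) * (ℓ : ℚ) / ((κ : ℚ) + (ℓ : ℚ))) *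
      (Nat.choose (2 * κ - 1) κ : ℚ) * (Nat.choose (2 * ℓ - 1) ℓ : ℚ) := by
  rw [sum_congr rfl fun p hp => sum_congr rfl fun q hq =>
    parity_summand_eq_sum_range_walkCount hp hq]
  calc _ = ∑ i ∈ range κ, 2 * ((i : ℚ) + 1) *
        (∑ p ∈ Icc 1 κ, (κ.choose p : ℚ) * 2 ^ (κ - p) * walkCount p (i + 1)) *
        (∑ q ∈ Icc 1 ℓ, (ℓ.choose q : ℚ) * 2 ^ (ℓ - q) * walkCount q (i + 1)) := by
        simp only [mul_sum, sum_mul]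
        refine (sum_congr rfl fun p _ => sum_comm).trans ?_
        rw [sum_comm]
        exact sum_congr rfl fun i _ => sum_comm
    _ = ∑ i ∈ range κ, 2 * ((i : ℚ) + 1) * walkCount (2 * κ) (2 * (i + 1)) *
        walkCount (2 * ℓ) (2 * (i + 1)) := by
      refine sum_congr rfl fun i _ => ?_
      rw [sum_Icc_choose_mul_pow_mul_walkCount κ (by positivity),
        sum_Icc_choose_mul_pow_mul_walkCount ℓ (by positivity)]
    _ = _ := sum_range_walkCount_two_mul κ ℓ hκ hℓ
end
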